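/- arXiv:2209.07768 — 3 statements merged into one kernel-verified Lean document; each statement's English description precedes it below -/
import Mathlib

section
/- Let κ ≥ λ be infinite cardinals with κ^{<λ} = κ, let P be the set of partial functions from κ to κ of cardinality less than λ, and let κ₁, …, κ_d be uncountable regular cardinals with κ₁ = κ⁺ and, for each i < d, κ_{i+1} = μᵢ⁺ for some μᵢ ≥ 2^{κᵢ} with μᵢ^{κᵢ} = μᵢ. Then for every p : κ₁ × ⋯ × κ_d → P there exist stationary sets κ′ᵢ ⊆ κᵢ such that ⋃ p[κ′₁ × ⋯ × κ′_d] is a function (i.e., all the partial functions p(x₁,…,x_d) for xᵢ ∈ κ′ᵢ are pairwise compatible). -/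
open Cardinal Set

/-- `C` is closed and unbounded in the ordinal `θ`. -/
def IsClubIn (C : Set Ordinal) (θ : Ordinal) : Prop :=
  (∀ a < θ, ∃ b ∈ C, a < b ∧ b < θ) ∧
  (∀ a < θ, a ≠ 0 → (∀ b < a, ∃ c ∈ C, b ≤ c ∧ c < a) → a ∈ C)

/-- `S` is stationary in the ordinal `θ`: it meets every club subset of `θ`. -/
def IsStationaryIn (S : Set Ordinal) (θ : Ordinal) : Prop :=
  ∀ C : Set Ordinal, IsClubIn C θ → (S ∩ C).Nonempty

/-!
In fact `p` is constant on a product of stationary sets. Its values range over a set of size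
`κ^{<λ} = κ`. Induct on `d` through the last coordinate: for `ξ < κ_d` the slice
`(x₁, …, x_{d-1}) ↦ p(x₁, …, x_{d-1}, ξ)` is one of at most `κ^{κ_{d-1}} ≤ 2^{κ_{d-1}} < κ_d`
functions, and fewer than `cf κ_d = κ_d` nonstationary sets cannot cover `κ_d`, so a single slice
is shared by a stationary set of `ξ`; fix one such `ξ` and apply the induction hypothesis to that
slice.
-/

universe u v

theorem IsClubIn.isClub_preimage_val {o : Ordinal.{v}} {C : Set Ordinal.{v}} (hC : IsClubIn C o) :
    IsClub ((↑) ⁻¹' C : Set (Iio o)) where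
  isCofinal x := by
    obtain ⟨b, hbC, hxb, hbo⟩ := hC.1 x x.2
    exact ⟨⟨b, hbo⟩, hbC, hxb.le⟩
  dirSupClosed t htC ht _ x hx := by
    by_cases hxt : x ∈ t
    · exact htC hxt
    have below : ∀ c ∈ t, c < x := fun c hc => (hx.1 hc).lt_of_ne (ne_of_mem_of_not_mem hc hxt)
    obtain ⟨c₀, hc₀⟩ := ht
    refine hC.2 x x.2 ((zero_le (a := (c₀ : Ordinal))).trans_lt (below c₀ hc₀)).ne' fun b hb => ?_
    obtain ⟨c, hct, hbc⟩ : ∃ c ∈ t, (⟨b, hb.trans x.2⟩ : Iio o) < c := by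
      by_contra! h
      exact hb.not_ge (hx.2 h)
    exact ⟨c, htC hct, hbc.le, below c hct⟩

theorem IsStationary.isStationaryIn_image_val {o : Ordinal.{v}} {S : Set (Iio o)}
    (hS : IsStationary S) : IsStationaryIn ((↑) '' S) o := fun C hC => by
  obtain ⟨x, hxS, hxC⟩ := hS hC.isClub_preimage_val
  exact ⟨x, mem_image_of_mem _ hxS, hxC⟩

theorem exists_isStationaryIn_fiber {o : Ordinal.{v}} (ho : o.cof ≠ ℵ₀) {α : Type u}
    (f : Ordinal.{v} → α) (hf : lift.{v} #(f '' Iio o) < lift.{u} o.cof) :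
    ∃ x ∈ Iio o, IsStationaryIn (Iio o ∩ f ⁻¹' {f x}) o := by
  have hcof : Order.cof (Iio o) = lift.{v + 1} o.cof := by
    rw [Ordinal.cof_Iio, Ordinal.lift_cof]
  -- `hf` rules out `o = 0`, whose cofinality is `0`
  have : Nonempty (Iio o) := by
    refine ⟨⟨0, mem_Iio.2 (pos_iff_ne_zero.2 fun h => ?_)⟩⟩
    simp [h] at hf
  have hcover : ⋃ a : f '' Iio o, (fun x : Iio o => f x) ⁻¹' {a.1} = Set.univ :=
    eq_univ_of_forall fun x => mem_iUnion.2 ⟨⟨f x, x, x.2, rfl⟩, rfl⟩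
  obtain ⟨⟨_, x, hx, rfl⟩, hfx⟩ := (isStationary_iUnion_iff (by rwa [hcof, Ne, lift_eq_aleph0])
    (by rw [hcof]; simpa [lift_lift] using (lift_lt.{max u v, v + 1}).2 hf)).1
    (hcover ▸ IsStationary.univ)
  refine ⟨x, hx, ?_⟩
  convert IsStationary.isStationaryIn_image_val hfx
  ext x
  simp [and_comm]

theorem Fin.mem_univ_pi_iff_last_init {n : ℕ} {α : Fin (n + 1) → Type*}
    {s : ∀ i, Set (α i)} {f : ∀ i, α i} :
    f ∈ univ.pi s ↔ f (last n) ∈ s (last n) ∧ init f ∈ univ.pi (init s) := by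
  simp only [mem_univ_pi, forall_fin_succ', init, and_comm]

theorem mk_bounded_subset_lt_le {α : Type u} (s : Set α) (c : Cardinal.{u}) :
    #{t : Set α | t ⊆ s ∧ #t < c} ≤ c * max #s ℵ₀ ^< c := by
  have hcover : {t : Set α | t ⊆ s ∧ #t < c} ⊆
      ⋃ o : Iio c.ord, {t | t ⊆ s ∧ #t ≤ o.1.card} := fun t ⟨hts, htc⟩ =>
    mem_iUnion.2 ⟨⟨(#t).ord, ord_lt_ord.2 htc⟩, hts, (card_ord _).ge⟩
  rw [← lift_le.{u + 1}, lift_mul]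
  calc lift.{u + 1} #{t : Set α | t ⊆ s ∧ #t < c}
      ≤ lift.{u + 1} #(⋃ o : Iio c.ord, {t | t ⊆ s ∧ #t ≤ o.1.card}) :=
        lift_le.2 (mk_le_mk_of_subset hcover)
    _ ≤ lift.{u} #(Iio c.ord) * ⨆ o : Iio c.ord, lift.{u + 1} #{t | t ⊆ s ∧ #t ≤ o.1.card} :=
        mk_iUnion_le_lift _
    _ ≤ lift.{u + 1} c * lift.{u + 1} (max #s ℵ₀ ^< c) := by
        refine mul_le_mul' (by rw [mk_Iio_ordinal, lift_lift, card_ord]) (ciSup_le' fun o => ?_)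
        exact lift_le.2 ((mk_bounded_subset_le s _).trans (le_powerlt _ (lt_ord.1 o.2)))

theorem mk_bounded_subset_Iio_prod_lt_le {κ μ : Cardinal.{u}} (hκ : ℵ₀ ≤ κ) (hμκ : μ ≤ κ)
    (hpow : κ ^< μ = κ) :
    #{t : Set (Ordinal.{u} × Ordinal.{u}) | t ⊆ Iio κ.ord ×ˢ Iio κ.ord ∧ #t < lift.{u + 1} μ} ≤
      lift.{u + 1} κ := by
  have hκ' : ℵ₀ ≤ lift.{u + 1} κ := aleph0_le_lift.2 hκ
  have hbox : #(Iio κ.ord ×ˢ Iio κ.ord) = lift.{u + 1} κ := by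
    rw [mk_congr (Equiv.Set.prod _ _), mk_prod, mk_Iio_ordinal, card_ord, lift_id, mul_eq_self hκ']
  refine (mk_bounded_subset_lt_le _ _).trans ?_
  rw [hbox, max_eq_left hκ']
  calc lift.{u + 1} μ * lift.{u + 1} κ ^< lift.{u + 1} μ ≤ lift.{u + 1} κ * lift.{u + 1} κ := by
        refine mul_le_mul' (lift_le.2 hμκ) (powerlt_le.2 fun x hx => ?_)
        obtain ⟨y, hy, rfl⟩ := lt_lift_iff.1 hx
        rw [← lift_power, lift_le]
        exact (le_powerlt κ hy).trans hpow.le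
    _ = lift.{u + 1} κ := mul_eq_self hκ'

theorem mk_pi_Iio_ord_le {d : ℕ} {K : Fin d → Cardinal.{v}} {κ : Cardinal.{v}} (hκ : ℵ₀ ≤ κ)
    (hK : ∀ i, K i ≤ κ) : #(univ.pi fun i => Iio (K i).ord) ≤ lift.{v + 1} κ := by
  calc #(univ.pi fun i => Iio (K i).ord) ≤ #(Fin d → Iio κ.ord) :=
        mk_le_of_injective (f := fun x i => ⟨x.1 i, (x.2 i trivial).trans_le (ord_le_ord.2 (hK i))⟩)
          fun x y hxy => Subtype.ext (funext fun i => congrArg Subtype.val (congrFun hxy i))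
    _ = lift.{v + 1} κ ^ d := by simp [mk_Iio_ordinal]
    _ ≤ lift.{v + 1} κ := power_nat_le (aleph0_le_lift.2 hκ)

theorem mk_image_le_mk_arrow {α : Type*} {ι : Type*} {β : Type*} {P : Set β} {s : Set α}
    (F : α → ι → β) (hF : ∀ a ∈ s, ∀ i, F a i ∈ P) : #(F '' s) ≤ #(ι → P) := by
  refine mk_le_of_injective (f := fun φ i => ⟨φ.1 i, ?_⟩) fun φ ψ h => ?_
  · obtain ⟨a, ha, hφ⟩ := φ.2
    exact hφ ▸ hF a ha i
  · exact Subtype.ext (funext fun i => congrArg Subtype.val (congrFun h i))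

theorem lift_power_mk_pi_lt {d : ℕ} {K : Fin (d + 1) → Cardinal.{v}} {c : Cardinal.{v}}
    (hc : ℵ₀ ≤ c) (hmono : Monotone K) (hcK : ∀ i, c < K i)
    (hpow : ∀ i : Fin (d + 1), ∀ h : i.1 + 1 < d + 1, c ^ K i < K ⟨i.1 + 1, h⟩) :
    lift.{v + 1} c ^ #(univ.pi fun j : Fin d => Iio (K j.castSucc).ord) <
      lift.{v + 1} (K (Fin.last d)) := by
  cases d with
  | zero =>
    have : #(univ.pi fun j : Fin 0 => Iio (K j.castSucc).ord) = 1 := by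
      rw [univ_eq_empty_iff.2 inferInstance, empty_pi, mk_univ, mk_eq_one]
    simpa [this] using hcK (Fin.last 0)
  | succ e =>
    have hbox := mk_pi_Iio_ord_le (K := fun j : Fin (e + 1) => K j.castSucc)
      (hc.trans (hcK ⟨e, by omega⟩).le) fun j => hmono (show j.1 ≤ e from Nat.lt_succ_iff.1 j.2)
    calc lift.{v + 1} c ^ #(univ.pi fun j : Fin (e + 1) => Iio (K j.castSucc).ord)
        ≤ lift.{v + 1} c ^ lift.{v + 1} (K ⟨e, by omega⟩) :=
          power_le_power_left (by simpa using (aleph0_pos.trans_le hc).ne') hbox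
      _ < lift.{v + 1} (K (Fin.last (e + 1))) := by
          rw [← lift_power, lift_lt]; exact hpow ⟨e, by omega⟩ (Nat.lt_succ_self _)

theorem lift_mk_image_slices_lt {β : Type u} {P : Set β} {c : Cardinal.{v}} (hc : ℵ₀ ≤ c)
    (hP : lift.{v} #P ≤ lift.{u} c) {d : ℕ} {K : Fin (d + 1) → Cardinal.{v}}
    (hmono : Monotone K) (hcK : ∀ i, c < K i)
    (hpow : ∀ i : Fin (d + 1), ∀ h : i.1 + 1 < d + 1, c ^ K i < K ⟨i.1 + 1, h⟩)
    {p : (Fin (d + 1) → Ordinal.{v}) → β} (hp : MapsTo p (univ.pi fun i => Iio (K i).ord) P) :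
    lift.{v} #((fun ξ (h : univ.pi fun j : Fin d => Iio (K j.castSucc).ord) =>
      p (Fin.snoc h.1 ξ)) '' Iio (K (Fin.last d)).ord) < lift.{max (v + 1) u} (K (Fin.last d)) := by
  set box := univ.pi fun j : Fin d => Iio (K j.castSucc).ord
  calc _ = #((fun ξ (h : box) => p (Fin.snoc h.1 ξ)) '' Iio (K (Fin.last d)).ord) :=
        lift_id'.{v, max u (v + 1)} _
    _ ≤ #(box → P) := by
        refine mk_image_le_mk_arrow _ fun ξ hξ h => hp ?_
        rw [Fin.mem_univ_pi_iff_last_init, Fin.init_snoc, Fin.snoc_last]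
        exact ⟨hξ, h.2⟩
    _ = lift.{v + 1} #P ^ lift.{u} #box := mk_arrow _ _
    _ ≤ lift.{u} (lift.{v + 1} c) ^ lift.{u} #box :=
        power_le_power_right (by simpa [lift_lift] using (lift_le.{v + 1}).2 hP)
    _ < lift.{u} (lift.{v + 1} (K (Fin.last d))) := by
        rw [← lift_power, lift_lt]
        exact lift_power_mk_pi_lt hc hmono hcK hpow
    _ = lift.{max (v + 1) u} (K (Fin.last d)) := lift_lift _

theorem exists_isStationaryIn_subsingleton_image {β : Type u} {P : Set β} {c : Cardinal.{v}}
    (hc : ℵ₀ ≤ c) (hP : lift.{v} #P ≤ lift.{u} c) :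
    ∀ {d : ℕ} {K : Fin d → Cardinal.{v}}, (∀ i, (K i).IsRegular) → Monotone K →
      (∀ i, c < K i) → (∀ i : Fin d, ∀ h : i.1 + 1 < d, c ^ K i < K ⟨i.1 + 1, h⟩) →
      ∀ p : (Fin d → Ordinal.{v}) → β, MapsTo p (univ.pi fun i => Iio (K i).ord) P →
      ∃ S : Fin d → Set Ordinal.{v},
        (∀ i, S i ⊆ Iio (K i).ord ∧ IsStationaryIn (S i) (K i).ord) ∧
        (p '' univ.pi S).Subsingleton
  | 0, _, _, _, _, _, p, _ => ⟨Fin.elim0, Fin.rec0, by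
      rintro _ ⟨x, -, rfl⟩ _ ⟨y, -, rfl⟩
      rw [Subsingleton.elim x y]⟩
  | d + 1, K, hreg, hmono, hcK, hpow, p, hp => by
    let g : Ordinal.{v} → univ.pi (fun j : Fin d => Iio (K j.castSucc).ord) → β :=
      fun ξ h => p (Fin.snoc h.1 ξ)
    obtain ⟨ξ₀, hξ₀, hT⟩ := exists_isStationaryIn_fiber
      ((hreg _).cof_ord ▸ (hc.trans_lt (hcK _)).ne') g
      (by rw [(hreg _).cof_ord]; exact lift_mk_image_slices_lt hc hP hmono hcK hpow hp)
    obtain ⟨S', hS', hS'p⟩ := exists_isStationaryIn_subsingleton_image hc hP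
      (fun j => hreg j.castSucc) (hmono.comp Fin.strictMono_castSucc.monotone)
      (fun j => hcK j.castSucc) (fun j h => hpow j.castSucc (by simp))
      (fun h => p (Fin.snoc h ξ₀)) fun h hh => hp <| by
        rw [Fin.mem_univ_pi_iff_last_init, Fin.init_snoc, Fin.snoc_last]
        exact ⟨hξ₀, hh⟩
    set S := (Fin.snoc S' (Iio (K (Fin.last d)).ord ∩ g ⁻¹' {g ξ₀}) : Fin (d + 1) → Set Ordinal)
    have hslice : ∀ x ∈ univ.pi S,
        Fin.init x ∈ univ.pi S' ∧ p x = p (Fin.snoc (Fin.init x) ξ₀) := by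
      intro x hx
      obtain ⟨⟨-, hxg⟩, hxS'⟩ := by simpa [S] using Fin.mem_univ_pi_iff_last_init.1 hx
      have hbox : Fin.init x ∈ univ.pi (fun j : Fin d => Iio (K j.castSucc).ord) :=
        fun j _ => (hS' j).1 (hxS' j)
      refine ⟨fun j _ => hxS' j, ?_⟩
      calc p x = g (x (Fin.last d)) ⟨Fin.init x, hbox⟩ := by simp [g, Fin.snoc_init_self]
        _ = p (Fin.snoc (Fin.init x) ξ₀) := congrFun hxg _
    refine ⟨S, fun i => ?_, ?_⟩
    · induction i using Fin.lastCases with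
      | last =>
        simp only [S, Fin.snoc_last]
        exact ⟨inter_subset_left, hT⟩
      | cast j => simpa [S] using hS' j
    · rintro _ ⟨x, hx, rfl⟩ _ ⟨y, hy, rfl⟩
      rw [(hslice x hx).2, (hslice y hy).2]
      exact hS'p (mem_image_of_mem _ (hslice x hx).1) (mem_image_of_mem _ (hslice y hy).1)

theorem stmt_12_general (kappa lam : Cardinal.{0}) (hkappa : ℵ₀ ≤ kappa)
    (hkl : lam ≤ kappa) (hpow : kappa ^< lam = kappa)
    (d : ℕ) (hd : 1 ≤ d) (K : Fin d → Cardinal.{0})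
    (hreg : ∀ i, (K i).IsRegular)
    (hK0 : K ⟨0, hd⟩ = Order.succ kappa)
    (hstep : ∀ i : Fin d, ∀ h : i.1 + 1 < d, ∃ mu : Cardinal.{0},
      (2 : Cardinal) ^ K i ≤ mu ∧ K ⟨i.1 + 1, h⟩ = Order.succ mu ∧ mu ^ K i = mu)
    (p : (Fin d → Ordinal) → Set (Ordinal × Ordinal))
    (hgraph : ∀ x : Fin d → Ordinal, (∀ i, x i < (K i).ord) →
      (∀ ab ∈ p x, ab.1 < kappa.ord ∧ ab.2 < kappa.ord) ∧
      (∀ a b b', (a, b) ∈ p x → (a, b') ∈ p x → b = b') ∧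
      Cardinal.mk (p x) < Cardinal.lift.{1,0} lam) :
    ∃ S : Fin d → Set Ordinal,
      (∀ i, S i ⊆ Set.Iio (K i).ord ∧ IsStationaryIn (S i) (K i).ord) ∧
      ∀ x y : Fin d → Ordinal, (∀ i, x i ∈ S i) → (∀ i, y i ∈ S i) →
        ∀ a b b', (a, b) ∈ p x → (a, b') ∈ p y → b = b' := by
  have hnext : ∀ i : Fin d, ∀ h : i.1 + 1 < d, 2 ^ K i < K ⟨i.1 + 1, h⟩ := fun i h => by
    obtain ⟨mu, hmu, hK, -⟩ := hstep i h
    exact hK ▸ hmu.trans_lt (Order.lt_succ mu)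
  have hmono : Monotone K := by
    obtain ⟨n, rfl⟩ : ∃ n, d = n + 1 := ⟨d - 1, by omega⟩
    exact Fin.monotone_iff_le_succ.2 fun i =>
      ((cantor _).trans (hnext i.castSucc (by simp))).le
  have hκK : ∀ i, kappa < K i := fun i =>
    (hK0 ▸ Order.lt_succ kappa).trans_le (hmono (Nat.zero_le i.1))
  have hpowK : ∀ i : Fin d, ∀ h : i.1 + 1 < d, kappa ^ K i < K ⟨i.1 + 1, h⟩ := fun i h => by
    rw [power_eq_two_power (hkappa.trans (hκK i).le) (natCast_lt_aleph0.le.trans hkappa)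
      (hκK i).le]
    exact hnext i h
  have hgraphs := (lift_uzero _).trans_le (mk_bounded_subset_Iio_prod_lt_le hkappa hkl hpow)
  obtain ⟨S, hS, hconst⟩ := exists_isStationaryIn_subsingleton_image hkappa hgraphs hreg hmono
    hκK hpowK p fun x hx => ⟨fun ab hab => (hgraph x fun i => hx i trivial).1 ab hab,
      (hgraph x fun i => hx i trivial).2.2⟩
  refine ⟨S, hS, fun x y hx hy a b b' hab hab' => ?_⟩
  have hxy : p x = p y :=
    hconst (mem_image_of_mem p fun i _ => hx i) (mem_image_of_mem p fun i _ => hy i)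
  exact (hgraph y fun i => (hS i).1 (hy i)).2.1 a b b' (hxy ▸ hab) hab'

/-- Theorem 4 of the paper. Partial functions from `κ` to `κ` of cardinality `< λ` are
represented by their graphs (single-valued sets of pairs of ordinals, of size `< λ`,
with entries below `κ.ord`). Given `p` defined on `κ₁ × ⋯ × κ_d`, with `κ₁ = κ⁺` and
`κ_{i+1} = μᵢ⁺` for some `μᵢ ≥ 2^{κᵢ}` with `μᵢ^{κᵢ} = μᵢ`, there are stationary sets
`κ′ᵢ ⊆ κᵢ` such that the union of all `p(x)` for `x` in their product is a function,
i.e. all these partial functions are pairwise compatible. -/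
theorem stmt_12 (kappa lam : Cardinal.{0}) (hkappa : ℵ₀ ≤ kappa) (hlam : ℵ₀ ≤ lam)
    (hkl : lam ≤ kappa) (hpow : kappa ^< lam = kappa)
    (d : ℕ) (hd : 1 ≤ d) (K : Fin d → Cardinal.{0})
    (hreg : ∀ i, (K i).IsRegular) (hunc : ∀ i, ℵ₀ < K i)
    (hK0 : K ⟨0, hd⟩ = Order.succ kappa)
    (hstep : ∀ i : Fin d, ∀ h : i.1 + 1 < d, ∃ mu : Cardinal.{0},
      (2 : Cardinal) ^ K i ≤ mu ∧ K ⟨i.1 + 1, h⟩ = Order.succ mu ∧ mu ^ K i = mu)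
    (p : (Fin d → Ordinal) → Set (Ordinal × Ordinal))
    (hgraph : ∀ x : Fin d → Ordinal, (∀ i, x i < (K i).ord) →
      (∀ ab ∈ p x, ab.1 < kappa.ord ∧ ab.2 < kappa.ord) ∧
      (∀ a b b', (a, b) ∈ p x → (a, b') ∈ p x → b = b') ∧
      Cardinal.mk (p x) < Cardinal.lift.{1,0} lam) :
    ∃ S : Fin d → Set Ordinal,
      (∀ i, S i ⊆ Set.Iio (K i).ord ∧ IsStationaryIn (S i) (K i).ord) ∧
      ∀ x y : Fin d → Ordinal, (∀ i, x i ∈ S i) → (∀ i, y i ∈ S i) →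
        ∀ a b b', (a, b) ∈ p x → (a, b') ∈ p y → b = b' :=
  stmt_12_general kappa lam hkappa hkl hpow d hd K hreg hK0 hstep p hgraph
end

section
/- Let d ≥ 1 and let κ₁, …, κ_d be uncountable regular cardinals with κ_{i+1} > 2^{κ_i} for i < d, and let κ < κ₁. Then for any f : κ₁ × ⋯ × κ_d → κ, there exist subsets κ′ᵢ ⊆ κᵢ with |κ′ᵢ| = κᵢ such that f is constant on κ′₁ × ⋯ × κ′_d. -/
open Cardinal Set

/-!
Induction on `d`, fixing the last coordinate. For `β < κ_d`, `y ↦ f (y, β)` is one of the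
`κ ^ (κ₁ ⋯ κ_{d-1}) < κ_d` colourings of `κ₁ × ⋯ × κ_{d-1}` by `κ` colours, where inductively
`(κ ^ (κ₁ ⋯ κ_{i-1})) ^ κ_i ≤ κ_i ^ κ_i = 2 ^ κ_i < κ_{i+1}`. By regularity of `κ_d`, a single
colouring is shared by a set of `β` of size `κ_d`; on that set `f` does not depend on the last
coordinate, and the induction hypothesis applies to the shared colouring.
-/

universe u

def ordBox {ι : Type} (K : ι → Cardinal.{u}) : Set (ι → Ordinal.{u}) :=
  {x | ∀ i, x i < (K i).ord}

theorem mk_ordBox {ι : Type} [Fintype ι] (K : ι → Cardinal.{u}) :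
    #(ordBox K) = lift.{u + 1} (∏ i, K i) := by
  refine (mk_congr (Equiv.subtypePiEquivPi (p := fun i o => o < (K i).ord))).trans ?_
  rw [mk_pi, ← lift_uzero (∏ i, K i), ← prod_eq_of_fintype, lift_prod]
  congr 1 with i
  exact (mk_Iio_ordinal _).trans (congrArg _ (card_ord _))

theorem mk_fun_ordBox_lt {ι : Type} [Fintype ι] {κ L : Cardinal.{u}} {K : ι → Cardinal.{u}}
    (h : κ ^ ∏ i, K i < L) : #(ordBox K → Iio κ.ord) < lift.{u + 1} L := by
  rwa [← power_def, mk_ordBox, mk_Iio_ordinal, card_ord, ← lift_power, lift_lt]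

theorem snoc_mem_ordBox {d : ℕ} {K : Fin (d + 1) → Cardinal.{u}} {y : Fin d → Ordinal.{u}}
    (hy : y ∈ ordBox (Fin.init K)) {β : Ordinal.{u}} (hβ : β < (K (Fin.last d)).ord) :
    (Fin.snoc y β : Fin (d + 1) → Ordinal.{u}) ∈ ordBox K := by
  intro i
  induction i using Fin.lastCases with
  | last => simpa using hβ
  | cast j => simpa [Fin.init] using hy j

theorem Cardinal.IsRegular.exists_mk_preimage_singleton_eq {K : Cardinal.{u}} (hK : K.IsRegular)
    {α : Type (u + 1)} (g : Iio K.ord → α) (hα : #α < Cardinal.lift.{u + 1} K) :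
    ∃ a, #(g ⁻¹' {a}) = Cardinal.lift.{u + 1} K := by
  have hIio : #(Iio K.ord) = Cardinal.lift.{u + 1} K := by rw [mk_Iio_ordinal, card_ord]
  rw [← hIio]
  refine infinite_pigeonhole g (hIio ▸ hK.lift.aleph0_le) ?_
  rwa [hIio, hK.lift.cof_ord]

theorem exists_large_set_snoc_eq {d : ℕ} {κ : Cardinal.{u}} {K : Fin (d + 1) → Cardinal.{u}}
    (hreg : (K (Fin.last d)).IsRegular) (hcount : κ ^ ∏ i, Fin.init K i < K (Fin.last d))
    {f : (Fin (d + 1) → Ordinal.{u}) → Ordinal.{u}} (hf : MapsTo f (ordBox K) (Iio κ.ord)) :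
    ∃ S ⊆ Iio (K (Fin.last d)).ord, #S = lift.{u + 1} (K (Fin.last d)) ∧
      ∃ β₀ ∈ S, ∀ β ∈ S, ∀ y ∈ ordBox (Fin.init K),
        f (Fin.snoc y β) = f (Fin.snoc y β₀) := by
  let g : Iio (K (Fin.last d)).ord → ordBox (Fin.init K) → Iio κ.ord :=
    fun β y => ⟨f (Fin.snoc y.1 β.1), hf (snoc_mem_ordBox y.2 β.2)⟩
  obtain ⟨c, hc⟩ := hreg.exists_mk_preimage_singleton_eq g (mk_fun_ordBox_lt hcount)
  obtain ⟨β₀, hβ₀⟩ : (g ⁻¹' {c}).Nonempty := by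
    rw [← nonempty_coe_sort, ← mk_ne_zero_iff, hc]
    exact hreg.lift.ne_zero
  refine ⟨Subtype.val '' (g ⁻¹' {c}), Subtype.coe_image_subset _ _,
    (mk_image_eq Subtype.val_injective).trans hc, β₀, mem_image_of_mem _ hβ₀, ?_⟩
  rintro _ ⟨β, hβ, rfl⟩ y hy
  exact congrArg Subtype.val (congrFun (hβ.trans hβ₀.symm) ⟨y, hy⟩)

theorem power_prod_castLE_lt {d : ℕ} {κ : Cardinal} {K : Fin d → Cardinal}
    (hK : ∀ i, ℵ₀ ≤ K i) (h0 : ∀ h : 0 < d, κ < K ⟨0, h⟩)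
    (hstep : ∀ i : Fin d, ∀ h : i.1 + 1 < d, (2 : Cardinal) ^ K i < K ⟨i.1 + 1, h⟩) :
    ∀ i : Fin d, κ ^ ∏ j : Fin i, K (Fin.castLE i.is_lt.le j) < K i := by
  rintro ⟨n, hn⟩
  induction n with
  | zero => simpa using h0 hn
  | succ n ih =>
    calc κ ^ ∏ j : Fin (n + 1), K (Fin.castLE hn.le j)
        = (κ ^ ∏ j : Fin n, K (Fin.castLE (by omega) j)) ^ K ⟨n, by omega⟩ := by
          rw [Fin.prod_univ_castSucc, power_mul]; rfl
      _ ≤ K ⟨n, by omega⟩ ^ K ⟨n, by omega⟩ := power_le_power_right (ih _).le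
      _ = 2 ^ K ⟨n, by omega⟩ := power_self_eq (hK _)
      _ < K ⟨n + 1, hn⟩ := hstep ⟨n, by omega⟩ hn

theorem exists_const_on_pi_of_power_prod_lt {d : ℕ} {κ : Cardinal.{u}}
    {K : Fin d → Cardinal.{u}} (hreg : ∀ i, (K i).IsRegular)
    (hcount : ∀ i : Fin d, κ ^ ∏ j : Fin i, K (Fin.castLE i.is_lt.le j) < K i)
    {f : (Fin d → Ordinal.{u}) → Ordinal.{u}} (hf : MapsTo f (ordBox K) (Iio κ.ord)) :
    ∃ S : Fin d → Set Ordinal.{u},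
      (∀ i, S i ⊆ Iio (K i).ord ∧ #(S i) = lift.{u + 1} (K i)) ∧
      ∃ c, ∀ x : Fin d → Ordinal, (∀ i, x i ∈ S i) → f x = c := by
  induction d with
  | zero =>
    exact ⟨finZeroElim, finZeroElim, f finZeroElim, fun x _ => congrArg f (Subsingleton.elim _ _)⟩
  | succ d ih =>
    obtain ⟨S, hS_sub, hS_card, β₀, hβ₀, hconst⟩ :=
      exists_large_set_snoc_eq (hreg _) (hcount (Fin.last d)) hf
    obtain ⟨S', hS', c, hc⟩ := ih (fun i => hreg _) (fun i => hcount i.castSucc)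
      (f := fun y => f (Fin.snoc y β₀)) fun y hy => hf (snoc_mem_ordBox hy (hS_sub hβ₀))
    refine ⟨Fin.snoc S' S,
      Fin.lastCases (by simpa using ⟨hS_sub, hS_card⟩) (by simpa using hS'), c, fun x hx => ?_⟩
    have hx_init : ∀ i, Fin.init x i ∈ S' i := fun i => by simpa [Fin.init] using hx i.castSucc
    rw [← Fin.snoc_init_self x, hconst _ (by simpa using hx (Fin.last d)) _
      fun i => (hS' i).1 (hx_init i)]
    exact hc _ hx_init

theorem stmt_17_general (kappa : Cardinal.{0}) (d : ℕ) (hd : 1 ≤ d)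
    (K : Fin d → Cardinal.{0})
    (hreg : ∀ i, (K i).IsRegular)
    (h1 : kappa < K ⟨0, hd⟩)
    (hstep : ∀ i : Fin d, ∀ h : i.1 + 1 < d, (2 : Cardinal) ^ K i < K ⟨i.1 + 1, h⟩)
    (f : (Fin d → Ordinal) → Ordinal)
    (hf : ∀ x : Fin d → Ordinal, (∀ i, x i < (K i).ord) → f x < kappa.ord) :
    ∃ S : Fin d → Set Ordinal,
      (∀ i, S i ⊆ Set.Iio (K i).ord ∧ Cardinal.mk (S i) = Cardinal.lift.{1,0} (K i)) ∧
      ∃ c : Ordinal, ∀ x : Fin d → Ordinal, (∀ i, x i ∈ S i) → f x = c :=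
  exists_const_on_pi_of_power_prod_lt hreg
    (power_prod_castLE_lt (fun i => (hreg i).aleph0_le) (fun _ => h1) hstep) fun x hx => hf x hx

/-- Full-cardinality polarized partition theorem: a coloring of `κ₁ × ⋯ × κ_d` by fewer than
`κ₁` colors is constant on a product of sets of full cardinality, provided `κ_{i+1} > 2^{κ_i}`. -/
theorem stmt_17 (kappa : Cardinal.{0}) (d : ℕ) (hd : 1 ≤ d)
    (K : Fin d → Cardinal.{0})
    (hreg : ∀ i, (K i).IsRegular) (hunc : ∀ i, ℵ₀ < K i)
    (h1 : kappa < K ⟨0, hd⟩)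
    (hstep : ∀ i : Fin d, ∀ h : i.1 + 1 < d, (2 : Cardinal) ^ K i < K ⟨i.1 + 1, h⟩)
    (f : (Fin d → Ordinal) → Ordinal)
    (hf : ∀ x : Fin d → Ordinal, (∀ i, x i < (K i).ord) → f x < kappa.ord) :
    ∃ S : Fin d → Set Ordinal,
      (∀ i, S i ⊆ Set.Iio (K i).ord ∧ Cardinal.mk (S i) = Cardinal.lift.{1,0} (K i)) ∧
      ∃ c : Ordinal, ∀ x : Fin d → Ordinal, (∀ i, x i ∈ S i) → f x = c :=
  stmt_17_general kappa d hd K hreg h1 hstep f hf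
end

section
/- Assume the principle PG(ℵ₀): for every d ≥ 1 and every coloring of (ω^ω)^d by finitely many colors, there exist somewhere dense sets D₁, …, D_d ⊆ ω^ω on which the coloring is constant. Then the Halpern–Läuchli theorem holds: for all finitely branching rooted trees T₁, …, T_d without terminal nodes in which every branch contains infinitely many splitting nodes, and every coloring f of the level product ⋃_m T₁(m) × ⋯ × T_d(m) by finitely many colors, there exist a level l, nodes tᵢ ∈ Tᵢ(l), a level n > l, and sets Dᵢ ⊆ Tᵢ(n) such that every immediate successor of tᵢ has a successor in Dᵢ and f is constant on D₁ × ⋯ × D_d. -/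
open Set

/-- The basic open subset of Baire space determined by a finite sequence `s`. -/
def baireCyl (s : List ℕ) : Set (ℕ → ℕ) :=
  {x | ∀ i : ℕ, ∀ h : i < s.length, x i = s.get ⟨i, h⟩}

/-- `D` is somewhere dense in Baire space: dense in some basic open set. -/
def SomewhereDenseBaire (D : Set (ℕ → ℕ)) : Prop :=
  ∃ s : List ℕ, ∀ t : List ℕ, s <+: t → (D ∩ baireCyl t).Nonempty

/-- The principle `PG(ℵ₀)`: every coloring of a finite product of Baire spaces by
finitely many colors is constant on a product of somewhere dense sets. -/
def PGAlephZero : Prop :=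
  ∀ (d : ℕ), 1 ≤ d → ∀ (C : Type) (_ : Finite C)
    (f : (Fin d → (ℕ → ℕ)) → C),
    ∃ D : Fin d → Set (ℕ → ℕ), (∀ i, SomewhereDenseBaire (D i)) ∧
      ∃ c : C, ∀ x : Fin d → (ℕ → ℕ), (∀ i, x i ∈ D i) → f x = c

/-- A tree here is a set of finite sequences of naturals: nonempty, closed under prefixes,
with every node having at least one but finitely many immediate successors, and every
branch containing infinitely many splitting nodes. -/
structure GoodTree (T : Set (List ℕ)) : Prop where
  root : [] ∈ T
  prefixClosed : ∀ s t : List ℕ, s <+: t → t ∈ T → s ∈ T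
  succExists : ∀ t ∈ T, ∃ n : ℕ, t ++ [n] ∈ T
  finBranching : ∀ t ∈ T, {n : ℕ | t ++ [n] ∈ T}.Finite
  splitting : ∀ b : ℕ → ℕ, (∀ n : ℕ, (List.ofFn fun i : Fin n => b i) ∈ T) →
    ∀ m : ℕ, ∃ n ≥ m, ∃ k k' : ℕ, k ≠ k' ∧
      (List.ofFn fun i : Fin n => b i) ++ [k] ∈ T ∧
      (List.ofFn fun i : Fin n => b i) ++ [k'] ∈ T

/-!
Each point `x` of Baire space codes a branch of a tree `T`: its `n`-th coordinate says which
proper extension of the current node comes next. Under this coding a set that is dense in the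
cylinder of `s` is sent to branches passing through every node strictly above the node coded by
`s`. Fix an ultrafilter `U` on `ℕ` containing the cofinite sets and color a tuple of points by the
`U`-limit of the colors of the level products along the coded branches. `PG(ℵ₀)` gives somewhere
dense sets `Eᵢ` on which this color is a constant `c`. Above a common level `l`, pick nodes `tᵢ`
over which the branches of `Eᵢ` are dense, and one branch of `Eᵢ` through each immediate
successor of `tᵢ`. There are finitely many tuples of these branches, each colored `c` at
`U`-many levels, so some level `n > l` works for all of them at once.
-/

theorem mem_baireCyl_append_singleton {x : ℕ → ℕ} {s : List ℕ} {k : ℕ} :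
    x ∈ baireCyl (s ++ [k]) ↔ x ∈ baireCyl s ∧ x s.length = k := by
  simp only [baireCyl, mem_ofPred_eq, List.get_eq_getElem, List.length_append,
    List.length_singleton]
  constructor
  · intro h
    refine ⟨fun i hi => ?_, ?_⟩
    · rw [h i (by omega), List.getElem_append_left hi]
    · rw [h s.length (by omega), List.getElem_concat_length rfl]
  · rintro ⟨h, rfl⟩ i hi
    rcases Nat.lt_or_ge i s.length with hi' | hi'
    · rw [h i hi', List.getElem_append_left hi']
    · obtain rfl : i = s.length := by omega
      rw [List.getElem_concat_length rfl]

theorem eq_of_mem_baireCyl {x y : ℕ → ℕ} {s : List ℕ} (hx : x ∈ baireCyl s)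
    (hy : y ∈ baireCyl s) {i : ℕ} (hi : i < s.length) : x i = y i := by
  rw [hx i hi, hy i hi]

theorem Ultrafilter.exists_eventually_eq {α C : Type*} [Finite C] (U : Ultrafilter α)
    (g : α → C) : ∃ c, ∀ᶠ a in U, g a = c := by
  obtain ⟨c, hc⟩ := (U.map g).eq_pure_of_finite
  exact ⟨c, show {c} ∈ U.map g from hc ▸ Ultrafilter.mem_pure.2 rfl⟩

theorem Ultrafilter.exists_gt_forall_of_eventually {ι : Type*} [Finite ι] {U : Ultrafilter ℕ}
    (hU : (U : Filter ℕ) ≤ Filter.atTop) {p : ι → ℕ → Prop} (hp : ∀ i, ∀ᶠ n in U, p i n)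
    (l : ℕ) : ∃ n > l, ∀ i, p i n :=
  ((Filter.eventually_gt_atTop l).filter_mono hU |>.and (Filter.eventually_all.2 hp)).exists

namespace GoodTree

variable {T : Set (List ℕ)} (hT : GoodTree T)

include hT in
theorem exists_extension_length_eq {u : List ℕ} (hu : u ∈ T) {l : ℕ} (hl : u.length ≤ l) :
    ∃ t ∈ T, u <+: t ∧ t.length = l := by
  induction l, hl using Nat.le_induction with
  | base => exact ⟨u, hu, List.prefix_refl u, rfl⟩
  | succ l _ ih =>
    obtain ⟨t, ht, hut, rfl⟩ := ih
    obtain ⟨m, hm⟩ := hT.succExists t ht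
    exact ⟨t ++ [m], hm, hut.trans (List.prefix_append _ _), by simp⟩

include hT in
theorem exists_range_eq_properExt {u : List ℕ} (hu : u ∈ T) :
    ∃ e : ℕ → List ℕ, range e = {v | v ∈ T ∧ u <+: v ∧ u.length < v.length} := by
  obtain ⟨m, hm⟩ := hT.succExists u hu
  obtain ⟨e, he⟩ := Set.Countable.exists_eq_range (Set.to_countable _)
    (show {v | v ∈ T ∧ u <+: v ∧ u.length < v.length}.Nonempty from
      ⟨u ++ [m], hm, List.prefix_append _ _, by simp⟩)
  exact ⟨e, he.symm⟩

open Classical in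
/-- Enumerates the nodes of `T` strictly above `u` (junk if `u ∉ T`). -/
noncomputable def properExtEnum (u : List ℕ) : ℕ → List ℕ :=
  if hu : u ∈ T then (hT.exists_range_eq_properExt hu).choose else fun _ => u

theorem properExtEnum_spec {u : List ℕ} (hu : u ∈ T) (k : ℕ) :
    hT.properExtEnum u k ∈ T ∧ u <+: hT.properExtEnum u k ∧
      u.length < (hT.properExtEnum u k).length := by
  have := (hT.exists_range_eq_properExt hu).choose_spec
  rw [properExtEnum, dif_pos hu]
  exact this.subset (mem_range_self k)

theorem exists_properExtEnum_eq {u v : List ℕ} (hu : u ∈ T) (hv : v ∈ T) (huv : u <+: v)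
    (hlen : u.length < v.length) : ∃ k, hT.properExtEnum u k = v := by
  have := (hT.exists_range_eq_properExt hu).choose_spec
  rw [properExtEnum, dif_pos hu]
  exact this.superset ⟨hv, huv, hlen⟩

noncomputable def approx (x : ℕ → ℕ) : ℕ → List ℕ
  | 0 => []
  | n + 1 => hT.properExtEnum (approx x n) (x n)

theorem approx_mem (x : ℕ → ℕ) (n : ℕ) : hT.approx x n ∈ T := by
  induction n with
  | zero => exact hT.root
  | succ n ih => exact (hT.properExtEnum_spec ih (x n)).1

theorem approx_prefix_succ (x : ℕ → ℕ) (n : ℕ) : hT.approx x n <+: hT.approx x (n + 1) :=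
  (hT.properExtEnum_spec (hT.approx_mem x n) (x n)).2.1

theorem le_length_approx (x : ℕ → ℕ) (n : ℕ) : n ≤ (hT.approx x n).length := by
  induction n with
  | zero => exact Nat.zero_le _
  | succ n ih => exact ih.trans_lt (hT.properExtEnum_spec (hT.approx_mem x n) (x n)).2.2

theorem approx_prefix_of_le (x : ℕ → ℕ) {n m : ℕ} (h : n ≤ m) :
    hT.approx x n <+: hT.approx x m := by
  induction m, h using Nat.le_induction with
  | base => exact List.prefix_refl _
  | succ m _ ih => exact ih.trans (hT.approx_prefix_succ x m)

theorem approx_congr {x y : ℕ → ℕ} {n : ℕ} (h : ∀ i < n, x i = y i) :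
    hT.approx x n = hT.approx y n := by
  induction n with
  | zero => rfl
  | succ n ih =>
    simp only [approx, ih fun i hi => h i (Nat.lt_succ_of_lt hi), h n (Nat.lt_succ_self n)]

noncomputable def level (x : ℕ → ℕ) (n : ℕ) : List ℕ :=
  (hT.approx x n).take n

theorem level_mem (x : ℕ → ℕ) (n : ℕ) : hT.level x n ∈ T :=
  hT.prefixClosed _ _ (List.take_prefix n _) (hT.approx_mem x n)

theorem length_level (x : ℕ → ℕ) (n : ℕ) : (hT.level x n).length = n := by
  simp [level, hT.le_length_approx x n]

theorem prefix_level {x : ℕ → ℕ} {v : List ℕ} {m n : ℕ} (hv : v <+: hT.approx x m)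
    (hn : v.length ≤ n) : v <+: hT.level x n := by
  refine List.prefix_take_iff.2 ⟨?_, hn⟩
  exact List.prefix_of_prefix_length_le (hv.trans (hT.approx_prefix_of_le x (le_max_left m n)))
    (hT.approx_prefix_of_le x (le_max_right m n)) (hn.trans (hT.le_length_approx x n))

theorem exists_approx_succ_eq {x₀ : ℕ → ℕ} {s : List ℕ} (hx₀ : x₀ ∈ baireCyl s) {v : List ℕ}
    (hv : v ∈ T) (huv : hT.approx x₀ s.length <+: v)
    (hlen : (hT.approx x₀ s.length).length < v.length) :
    ∃ k, ∀ x ∈ baireCyl (s ++ [k]), hT.approx x (s.length + 1) = v := by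
  obtain ⟨k, hk⟩ := hT.exists_properExtEnum_eq (hT.approx_mem x₀ _) hv huv hlen
  refine ⟨k, fun x hx => ?_⟩
  rw [mem_baireCyl_append_singleton] at hx
  rw [approx, hT.approx_congr fun i hi => eq_of_mem_baireCyl hx.1 hx₀ hi, hx.2, hk]

def DenseAbove (E : Set (ℕ → ℕ)) (u : List ℕ) : Prop :=
  ∀ v ∈ T, u <+: v → u.length < v.length → ∃ x ∈ E, ∀ n, v.length ≤ n → v <+: hT.level x n

theorem DenseAbove.mono {E : Set (ℕ → ℕ)} {u t : List ℕ} (hu : hT.DenseAbove E u)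
    (hut : u <+: t) : hT.DenseAbove E t := fun v hv htv hlen =>
  hu v hv (hut.trans htv) (hut.length_le.trans_lt hlen)

theorem exists_denseAbove {E : Set (ℕ → ℕ)} (hE : SomewhereDenseBaire E) :
    ∃ u ∈ T, hT.DenseAbove E u := by
  obtain ⟨s, hs⟩ := hE
  obtain ⟨x₀, -, hx₀⟩ := hs s (List.prefix_refl s)
  refine ⟨hT.approx x₀ s.length, hT.approx_mem x₀ _, fun v hv huv hlen => ?_⟩
  obtain ⟨k, hk⟩ := hT.exists_approx_succ_eq hx₀ hv huv hlen
  obtain ⟨x, hxE, hx⟩ := hs (s ++ [k]) (List.prefix_append _ _)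
  exact ⟨x, hxE, fun n hn => hT.prefix_level (m := s.length + 1) (by rw [hk x hx]) hn⟩

end GoodTree

theorem GoodTree.exists_common_extension {ι : Type*} [Fintype ι] {T : ι → Set (List ℕ)}
    (hT : ∀ i, GoodTree (T i)) {u : ι → List ℕ} (hu : ∀ i, u i ∈ T i) :
    ∃ l, ∃ t : ι → List ℕ, ∀ i, t i ∈ T i ∧ u i <+: t i ∧ (t i).length = l := by
  refine ⟨Finset.univ.sup fun i => (u i).length, ?_⟩
  choose t ht using fun i => (hT i).exists_extension_length_eq (hu i)
    (Finset.le_sup (f := fun i => (u i).length) (Finset.mem_univ i))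
  exact ⟨t, ht⟩

/-- `PG(ℵ₀)` implies the Halpern–Läuchli theorem. -/
theorem stmt_19 (hPG : PGAlephZero) :
    ∀ (d : ℕ), 1 ≤ d → ∀ (T : Fin d → Set (List ℕ)), (∀ i, GoodTree (T i)) →
    ∀ (C : Type) (_ : Finite C) (f : (Fin d → List ℕ) → C),
    ∃ (l : ℕ) (t : Fin d → List ℕ),
      (∀ i, t i ∈ T i ∧ (t i).length = l) ∧
      ∃ n > l, ∃ D : Fin d → Set (List ℕ),
        (∀ i, D i ⊆ {s ∈ T i | s.length = n}) ∧
        (∀ i, ∀ m : ℕ, (t i) ++ [m] ∈ T i → ∃ s ∈ D i, (t i) ++ [m] <+: s) ∧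
        ∃ c : C, ∀ x : Fin d → List ℕ, (∀ i, x i ∈ D i) → f x = c := by
  intro d hd T hT C _ f
  let U : Ultrafilter ℕ := .of Filter.atTop
  choose F hF using fun X : Fin d → ℕ → ℕ =>
    U.exists_eventually_eq fun n => f fun i => (hT i).level (X i) n
  obtain ⟨E, hE, c, hc⟩ := hPG d hd C ‹_› F
  choose u hu hdense using fun i => (hT i).exists_denseAbove (hE i)
  obtain ⟨l, t, ht⟩ := GoodTree.exists_common_extension hT hu
  choose ht htu htl using ht
  have (i : Fin d) : Finite {m // t i ++ [m] ∈ T i} :=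
    ((hT i).finBranching _ (ht i)).to_subtype
  choose χ hχE hχ using fun i (m : {m // t i ++ [m] ∈ T i}) =>
    ((hdense i).mono (hT i) (htu i)) _ m.2 (List.prefix_append _ _) (by simp)
  have hσ (σ : ∀ i, {m // t i ++ [m] ∈ T i}) :
      ∀ᶠ n in U, f (fun i => (hT i).level (χ i (σ i)) n) = c :=
    hc (fun i => χ i (σ i)) (fun i => hχE _ _) ▸ hF _
  obtain ⟨n, hnl, hn⟩ := Ultrafilter.exists_gt_forall_of_eventually (Ultrafilter.of_le _) hσ l
  refine ⟨l, t, fun i => ⟨ht i, htl i⟩, n, hnl,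
    fun i => range fun m => (hT i).level (χ i m) n, ?_, ?_, c, ?_⟩
  · rintro i _ ⟨m, rfl⟩
    exact ⟨(hT i).level_mem _ n, (hT i).length_level _ n⟩
  · intro i m hm
    exact ⟨_, ⟨⟨m, hm⟩, rfl⟩, hχ i ⟨m, hm⟩ n (by simp [htl]; omega)⟩
  · intro x hx
    choose σ hxσ using hx
    obtain rfl : x = fun i => (hT i).level (χ i (σ i)) n := funext fun i => (hxσ i).symm
    exact hn σ
end
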